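/- arXiv:2604.10779 — 2 statements merged into one kernel-verified Lean document; each statement's English description precedes it below -/
import Mathlib

section
/- Let π be a permutation of length n ≥ 1 with last entry π_n, and let k ≥ 0. Then the subsequence of s^k(π) consisting of the entries strictly to the right of the entry π_n is increasing, and every entry of that subsequence is greater than π_n. -/
noncomputable section
theorem foldrMaxMem (x : ℕ) (xs : List ℕ) : (x :: xs).foldr max 0 ∈ x :: xs := by
  induction xs generalizing x with
  | nil => simp
  | cons y ys ih =>
    rcases max_choice x ((y :: ys).foldr max 0) with h | h
    · simp only [List.foldr_cons] at h ⊢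
      rw [h]; exact List.mem_cons_self
    · simp only [List.foldr_cons] at h ⊢
      rw [h]; exact List.mem_cons_of_mem _ (ih y)
theorem takeWhileLt (l : List ℕ) (m : ℕ) (hm : m ∈ l) :
    (l.takeWhile (fun y => y ≠ m)).length < l.length := by
  have hd : l.dropWhile (fun y => y ≠ m) ≠ [] := by
    intro h; rw [List.dropWhile_eq_nil_iff] at h; simpa using h m hm
  have h1 : (l.takeWhile (fun y => y ≠ m)).length
      + (l.dropWhile (fun y => y ≠ m)).length = l.length := by
    rw [← List.length_append, List.takeWhile_append_dropWhile]
  have h2 : 0 < (l.dropWhile (fun y => y ≠ m)).length := List.length_pos_iff.mpr hd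
  omega
theorem dropWhileDropLt (l : List ℕ) (m : ℕ) (hl : l ≠ []) :
    ((l.dropWhile (fun y => y ≠ m)).drop 1).length < l.length := by
  have h1 : (l.takeWhile (fun y => y ≠ m)).length
      + (l.dropWhile (fun y => y ≠ m)).length = l.length := by
    rw [← List.length_append, List.takeWhile_append_dropWhile]
  have h2 : 0 < l.length := List.length_pos_iff.mpr hl
  rw [List.length_drop]; omega

/-- West's stack-sorting map `s`: `s([]) = []`, `s(L m R) = s(L) s(R) m` for `m` the maximum. -/
def ss : List ℕ → List ℕ
  | [] => []
  | x :: xs =>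
    ss ((x :: xs).takeWhile (fun y => y ≠ (x :: xs).foldr max 0)) ++
    ss (((x :: xs).dropWhile (fun y => y ≠ (x :: xs).foldr max 0)).drop 1) ++
    [(x :: xs).foldr max 0]
termination_by l => l.length
decreasing_by
  · exact takeWhileLt _ _ (foldrMaxMem _ _)
  · exact dropWhileDropLt _ _ (by simp)

/-- `met π` : the least `k ≥ 0` with `s^k(π)` increasing. -/
def met (l : List ℕ) : ℕ := sInf {k | List.Pairwise (· < ·) (ss^[k] l)}

/-- Right-to-left maxima of a list, read from left to right.  For the prefix of `s^{i-1}(π)`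
before `0` this is exactly the column sequence `C_{π,i}`. -/
def rtlMax : List ℕ → List ℕ
  | [] => []
  | x :: xs => if ∀ y ∈ xs, y < x then x :: rtlMax xs else rtlMax xs

/-- The blocks `b_{π,i,j}`: the segments strictly between consecutive right-to-left maxima. -/
def blocksOf : List ℕ → List (List ℕ)
  | [] => []
  | x :: xs =>
    if ∀ y ∈ xs, y < x then [] :: blocksOf xs
    else
      match blocksOf xs with
      | [] => [[x]]
      | b :: bs => (x :: b) :: bs

/-- The part of `s^{i-1}(π)` strictly before the entry `0`. -/
def prefixAt (π : List ℕ) (i : ℕ) : List ℕ := (ss^[i-1] π).takeWhile (fun x => x ≠ 0)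

/-- The column sequence `C_{π,i}`. -/
def colSeqAt (π : List ℕ) (i : ℕ) : List ℕ := rtlMax (prefixAt π i)

/-- The block sequence `B_{π,i}`. -/
def blocksAt (π : List ℕ) (i : ℕ) : List (List ℕ) := blocksOf (prefixAt π i)

/-- `col_π(v)`: the unique `i` with `v ∈ C_{π,i}` (as the least such `i ≥ 1`). -/
def colOf (π : List ℕ) (v : ℕ) : ℕ := sInf {i | 1 ≤ i ∧ v ∈ colSeqAt π i}

/-- `colpos_π(v)`: the (1-indexed) position of `v` in `C_{π,col_π(v)}`. -/
def colposOf (π : List ℕ) (v : ℕ) : ℕ := (colSeqAt π (colOf π v)).idxOf v + 1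

/-- `leftof_π(v) = c_{π,col_π(v)-1,j}` for the unique `j` with `v = max(b_{π,col_π(v)-1,j})`. -/
def leftOf (π : List ℕ) (v : ℕ) : ℕ :=
  (colSeqAt π (colOf π v - 1)).getD
    (((blocksAt π (colOf π v - 1)).map (fun b => b.foldr max 0)).idxOf v) 0

/-- `row_π(v)`: follow `leftof` back to column 1 and take `colpos` there. -/
def rowOf (π : List ℕ) (v : ℕ) : ℕ := colposOf π ((leftOf π)^[colOf π v - 1] v)

/-- `upof_π(v) = c_{π,col_π(v),colpos_π(v)-1}`. -/
def upOf (π : List ℕ) (v : ℕ) : ℕ := (colSeqAt π (colOf π v)).getD (colposOf π v - 2) 0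

/-- The stack-sorting tableau `T_π(v) = (col_π(v), row_π(v))`. -/
def Tmap (π : List ℕ) (v : ℕ) : ℕ × ℕ := (colOf π v, rowOf π v)

/-- The composition `α_π = (|{v ∈ [n] : row_π(v) = j}|)_{j=1}^{|C_{π,1}|}` (here `n = |π| - 1`). -/
def alphaOf (π : List ℕ) : List ℕ :=
  (List.range' 1 (colSeqAt π 1).length).map
    (fun j => ((Finset.Icc 1 (π.length - 1)).filter (fun v => rowOf π v = j)).card)

/-- Membership in the composition diagram `D(α) = {(i,j) : 1 ≤ j ≤ ℓ(α), 1 ≤ i ≤ α_j}`. -/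
def inDiagram (α : List ℕ) (p : ℕ × ℕ) : Prop :=
  1 ≤ p.1 ∧ 1 ≤ p.2 ∧ p.2 ≤ α.length ∧ p.1 ≤ α.getD (p.2 - 1) 0

instance inDiagramDec (α : List ℕ) : DecidablePred (inDiagram α) := fun p => by
  unfold inDiagram; infer_instance

/-- `D(α)` as a finite set. -/
def diagramFinset (α : List ℕ) : Finset (ℕ × ℕ) :=
  (Finset.range (α.foldr max 0 + 1) ×ˢ Finset.range (α.length + 1)).filter
    (fun p => inDiagram α p)

/-- `colpos_α(i,j) = |{(i,j') ∈ D(α) : j' < j} ∪ {(i,0)}|`. -/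
def colposA (α : List ℕ) (p : ℕ × ℕ) : ℕ :=
  (((Finset.range p.2).filter (fun j' => inDiagram α (p.1, j'))) ∪ {0}).card

/-- `leftof_α(i,j) = (i-1,j)`. -/
def leftA (p : ℕ × ℕ) : ℕ × ℕ := (p.1 - 1, p.2)

/-- `upof_α(i,j) = (i, max({j' < j : (i,j') ∈ D(α)} ∪ {0}))`. -/
def upA (α : List ℕ) (p : ℕ × ℕ) : ℕ × ℕ :=
  (p.1, (((Finset.range p.2).filter (fun j' => inDiagram α (p.1, j'))) ∪ {0}).sup id)

/-- The hook length `h_α(i,j)`. -/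
def hook (α : List ℕ) (p : ℕ × ℕ) : ℕ :=
  if 1 < p.1 then
    ((diagramFinset α).filter (fun q =>
      q.1 ≤ p.1 - 1 ∧ (upA α (p.1 - 1, p.2)).2 < q.2 ∧ q.2 ≤ p.2)).card
  else 1

/-- The segment `B_{π,T}(i,j,k)` of `s^{k-1}(π)`, where `U = T⁻¹`. -/
def Bseg (π : List ℕ) (α : List ℕ) (U : ℕ × ℕ → ℕ) (i j k : ℕ) : List ℕ :=
  if (upA α (leftA (i, j))).2 > 0 then
    ((ss^[k-1] π).take ((ss^[k-1] π).idxOf (U (k, j)) + 1)).drop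
      ((ss^[k-1] π).idxOf (U (k, (upA α (leftA (i, j))).2)) + 1)
  else
    (ss^[k-1] π).take ((ss^[k-1] π).idxOf (U (k, j)) + 1)

/-- The inverse `T_π⁻¹` of the stack-sorting tableau. -/
def invTmap (π : List ℕ) : ℕ × ℕ → ℕ :=
  Function.invFunOn (Tmap π) (Set.Icc 1 (π.length - 1))

/-- A linear extension of `D(α)`, encoded as the list `[T(1), …, T(n)]`:
`T` is a bijection `{1,…,n} → D(α)` with `T(a) ≥_D T(b) → a ≥ b`. -/
def isLinExt (α : List ℕ) (ℓ : List (ℕ × ℕ)) : Prop :=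
  ℓ.Nodup ∧ (∀ p, p ∈ ℓ ↔ inDiagram α p) ∧
  ∀ a b, a < ℓ.length → b < ℓ.length →
    (ℓ.getD a (0, 0)).1 ≤ (ℓ.getD b (0, 0)).1 ∧ (ℓ.getD a (0, 0)).2 ≤ (ℓ.getD b (0, 0)).2 →
    b ≤ a
end

/-! Let `m` be the last entry of `π`. The property "`m` is followed by an increasing run of
entries larger than `m`" holds for `π` (the run is empty) and is preserved by `s`. Split
`l = L M R` at its maximum, so that `s(l) = s(L) s(R) M`. If `m` lies in `L` or equals `M`,
the run after `m` passes through `M`, which forces `R = ∅`; in every case the run after `m` in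
`s(L)` or `s(R)` is followed in `s(l)` only by `M`, which exceeds all other entries. -/

theorem List.exists_eq_append_cons_notMem {α : Type*} [DecidableEq α] {a : α} {l : List α}
    (h : a ∈ l) : ∃ s t, l = s ++ a :: t ∧ a ∉ s := by
  induction l with
  | nil => simp at h
  | cons x xs ih =>
    by_cases hx : x = a
    · exact ⟨[], xs, by simp [hx], List.not_mem_nil⟩
    · obtain ⟨s, t, rfl, hs⟩ := ih ((List.mem_cons.mp h).resolve_left (Ne.symm hx))
      exact ⟨x :: s, t, rfl, by simp [Ne.symm hx, hs]⟩

theorem List.append_cons_eq_append_cons_cases {α : Type*} {A B L R : List α} {a b : α}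
    (h : A ++ a :: B = L ++ b :: R) :
    (∃ C, L = A ++ a :: C ∧ B = C ++ b :: R) ∨ (a = b ∧ B = R) ∨
      ∃ C, R = C ++ a :: B := by
  rcases List.append_eq_append_iff.1 h with ⟨C, hL, hC⟩ | ⟨C, hA, hC⟩
  · rcases List.cons_eq_append_iff.1 hC with ⟨rfl, hbR⟩ | ⟨C', rfl, hB⟩
    · obtain ⟨rfl, rfl⟩ := List.cons.inj hbR
      exact Or.inr (Or.inl ⟨rfl, rfl⟩)
    · exact Or.inl ⟨C', hL, hB⟩
  · rcases List.cons_eq_append_iff.1 hC with ⟨rfl, haB⟩ | ⟨C', rfl, hR⟩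
    · obtain ⟨rfl, rfl⟩ := List.cons.inj haB
      exact Or.inr (Or.inl ⟨rfl, rfl⟩)
    · exact Or.inr (Or.inr ⟨C', hR⟩)

theorem List.Pairwise.append_singleton {α : Type*} {r : α → α → Prop} {l : List α} {b : α}
    (hl : l.Pairwise r) (hb : ∀ a ∈ l, r a b) : (l ++ [b]).Pairwise r :=
  List.pairwise_append.2 ⟨hl, List.pairwise_singleton _ b, fun a ha _ hc ↦
    (List.mem_singleton.1 hc) ▸ hb a ha⟩

theorem ss_nil : ss [] = [] := by
  rw [ss]

theorem ss_append_cons {L R : List ℕ} {M : ℕ} (hM : M ∉ L)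
    (hmax : ∀ y ∈ L ++ M :: R, y ≤ M) :
    ss (L ++ M :: R) = ss L ++ ss R ++ [M] := by
  obtain ⟨x, xs, hx⟩ : ∃ x xs, L ++ M :: R = x :: xs := by
    cases L <;> exact ⟨_, _, rfl⟩
  have hfold : (L ++ M :: R).foldr max 0 = M :=
    le_antisymm (List.max_le_of_forall_le _ _ hmax) (List.le_max_of_le (by simp) le_rfl)
  have hne : ∀ y ∈ L, (decide (y ≠ M)) = true := fun y hy =>
    decide_eq_true (fun h => hM (h ▸ hy))
  rw [hx, ss, ← hx, hfold, List.takeWhile_append_of_pos hne, List.dropWhile_append_of_pos hne,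
    List.takeWhile_cons_of_neg (by simp), List.dropWhile_cons_of_neg (by simp)]
  simp

@[elab_as_elim]
theorem max_split_induction {motive : List ℕ → Prop} (nil : motive [])
    (split : ∀ L M R, M ∉ L → (∀ y ∈ L ++ M :: R, y ≤ M) →
      motive L → motive R → motive (L ++ M :: R))
    (l : List ℕ) : motive l := by
  induction h : l.length using Nat.strong_induction_on generalizing l with
  | _ n ih =>
  rcases l with _ | ⟨x, xs⟩
  · exact nil
  obtain ⟨M, hM⟩ : ∃ M, M = (x :: xs).foldr max 0 := ⟨_, rfl⟩
  have hmax : ∀ y ∈ x :: xs, y ≤ M := fun y hy => hM ▸ List.le_max_of_le hy le_rfl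
  obtain ⟨L, R, hLR, hML⟩ := List.exists_eq_append_cons_notMem (hM ▸ foldrMaxMem x xs)
  rw [hLR] at hmax h ⊢
  simp only [List.length_append, List.length_cons] at h
  exact split L M R hML hmax (ih _ (by omega) L rfl) (ih _ (by omega) R rfl)

theorem perm_ss (l : List ℕ) : (ss l).Perm l := by
  induction l using max_split_induction with
  | nil => rw [ss_nil]
  | split L M R hM hmax ihL ihR =>
    rw [ss_append_cons hM hmax, List.append_assoc]
    exact ihL.append ((ihR.append_right [M]).trans (List.perm_append_singleton M R))

theorem perm_iterate_ss (k : ℕ) (l : List ℕ) : (ss^[k] l).Perm l := by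
  induction k with
  | zero => rfl
  | succ k ih => exact (Function.iterate_succ_apply' ss k l ▸ perm_ss _).trans ih

def IncreasingTailFrom (m : ℕ) (l : List ℕ) : Prop :=
  ∃ A B, l = A ++ m :: B ∧ (m :: B).Pairwise (· < ·)

theorem increasingTailFrom_ss {m : ℕ} {l : List ℕ} (hl : l.Nodup)
    (h : IncreasingTailFrom m l) : IncreasingTailFrom m (ss l) := by
  induction l using max_split_induction with
  | nil => simp [IncreasingTailFrom] at h
  | split L M R hM hmax ihL ihR =>
    obtain ⟨A, B, hAB, hB⟩ := h
    rw [ss_append_cons hM hmax]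
    have hLlt : ∀ y ∈ L, y < M := fun y hy =>
      lt_of_le_of_ne (hmax y (by simp [hy])) (fun h => hM (h ▸ hy))
    have hRlt : ∀ y ∈ R, y < M := fun y hy =>
      lt_of_le_of_ne (hmax y (by simp [hy])) (fun h => hl.of_append_right.notMem (h ▸ hy))
    -- an increasing run through `M` cannot continue past the maximum `M`
    have hR_nil (hsub : (M :: R).Sublist (m :: B)) : R = [] := by
      refine List.eq_nil_iff_forall_not_mem.2 fun r hr => ?_
      have := List.rel_of_pairwise_cons (hB.sublist hsub) hr
      have := hmax r (by simp [hr])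
      omega
    rcases List.append_cons_eq_append_cons_cases hAB.symm with
      ⟨C, rfl, rfl⟩ | ⟨rfl, rfl⟩ | ⟨C, rfl⟩
    · rw [hR_nil (by simp)]
      obtain ⟨A', B', hL', hB'⟩ := ihL hl.of_append_left ⟨A, C, rfl, hB.sublist (by simp)⟩
      refine ⟨A', B' ++ [M], by simp [hL', ss_nil], hB'.append_singleton ?_⟩
      exact fun y hy => hLlt y ((perm_ss _).subset (hL' ▸ List.mem_append_right _ hy))
    · rw [hR_nil (List.Sublist.refl _)]
      exact ⟨ss L, [], by simp [ss_nil], List.pairwise_singleton _ _⟩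
    · obtain ⟨A', B', hR', hB'⟩ := ihR hl.of_append_right.of_cons ⟨C, B, rfl, hB⟩
      refine ⟨ss L ++ A', B' ++ [M], by simp [hR'], hB'.append_singleton ?_⟩
      exact fun y hy => hRlt y ((perm_ss _).subset (hR' ▸ List.mem_append_right _ hy))

theorem increasingTailFrom_iterate_ss {m : ℕ} {l : List ℕ} (hl : l.Nodup)
    (h : IncreasingTailFrom m l) (k : ℕ) : IncreasingTailFrom m (ss^[k] l) := by
  induction k with
  | zero => exact h
  | succ k ih =>
    rw [Function.iterate_succ_apply']
    exact increasingTailFrom_ss (((perm_iterate_ss ..).nodup_iff).2 hl) ih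

theorem IncreasingTailFrom.pairwise_drop_idxOf {m : ℕ} {l : List ℕ} (hl : l.Nodup)
    (h : IncreasingTailFrom m l) : (m :: l.drop (l.idxOf m + 1)).Pairwise (· < ·) := by
  obtain ⟨A, B, rfl, hB⟩ := h
  have hmA : m ∉ A := fun hm => (List.nodup_append.1 hl).2.2 m hm m (by simp) rfl
  simpa [List.idxOf_append_of_notMem hmA] using hB

theorem stmt_2_general (π : List ℕ) (hnd : π.Nodup) (k : ℕ) :
    List.Pairwise (· < ·)
      ((ss^[k] π).drop ((ss^[k] π).idxOf ((π.getLast?).getD 0) + 1)) ∧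
    ∀ x ∈ (ss^[k] π).drop ((ss^[k] π).idxOf ((π.getLast?).getD 0) + 1),
      (π.getLast?).getD 0 < x := by
  rcases List.eq_nil_or_concat π with rfl | ⟨L, m, rfl⟩
  · simp [Function.iterate_fixed ss_nil]
  rw [List.concat_eq_append] at hnd ⊢
  have hbase : IncreasingTailFrom m (L ++ [m]) := ⟨L, [], rfl, List.pairwise_singleton _ m⟩
  have hrun := (increasingTailFrom_iterate_ss hnd hbase k).pairwise_drop_idxOf
    ((perm_iterate_ss ..).nodup_iff.2 hnd)
  rw [List.getLast?_concat, Option.getD_some]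
  exact (List.pairwise_cons.1 hrun).symm

/-- Lemma 5.1: the part of `s^k(π)` strictly to the right of the last entry `π_n` of `π`
is increasing and all its entries exceed `π_n`. -/
theorem stmt_2 (n : ℕ) (hn : 1 ≤ n) (π : List ℕ) (hlen : π.length = n) (hnd : π.Nodup)
    (k : ℕ) :
    List.Pairwise (· < ·)
      ((ss^[k] π).drop ((ss^[k] π).idxOf ((π.getLast?).getD 0) + 1)) ∧
    ∀ x ∈ (ss^[k] π).drop ((ss^[k] π).idxOf ((π.getLast?).getD 0) + 1),
      (π.getLast?).getD 0 < x :=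
  stmt_2_general π hnd k
end

section
/- For all π ∈ S_n', the sets {c_{π,i,j} : 1 ≤ j ≤ |C_{π,i}|}, for 1 ≤ i ≤ met(π), are pairwise disjoint and their union equals {1, 2, ..., n}. -/
/-! Write `s^k(π) = A_k 0 B_k`. Since `0` is the smallest entry, a pass of `s` keeps `B_k`
increasing and carries exactly the right-to-left maxima of `A_k`, i.e. the column `C_{π,k+1}`,
across `0`: as sets, `A_{k+1} = A_k \ C_{π,k+1}`. So the columns are disjoint pieces of
`A_0 = {1, …, n}`; and since `A_k` shrinks strictly until it is empty, which happens exactly when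
`s^k(π)` is increasing, they exhaust `{1, …, n}` by `k = met(π)`. -/

namespace StackSort

theorem foldr_max_eq {l : List ℕ} {m : ℕ} (hm : m ∈ l) (hmax : ∀ y ∈ l, y ≤ m) :
    l.foldr max 0 = m :=
  le_antisymm (List.max_le_of_forall_le l m hmax) (List.le_max_of_le hm le_rfl)

theorem ss_append_cons {L R : List ℕ} {m : ℕ} (hmL : m ∉ L)
    (hmax : ∀ y ∈ L ++ m :: R, y ≤ m) : ss (L ++ m :: R) = ss L ++ ss R ++ [m] := by
  obtain ⟨x, xs, hx⟩ := List.exists_cons_of_ne_nil (List.append_ne_nil_of_right_ne_nil L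
    (List.cons_ne_nil m R))
  have hne : ∀ y ∈ L, decide (y ≠ m) = true := fun y hy => by
    simpa using ne_of_mem_of_not_mem hy hmL
  rw [hx, ss, ← hx, foldr_max_eq (by simp) hmax, List.takeWhile_append_of_pos hne,
    List.dropWhile_append_of_pos hne, List.takeWhile_cons_of_neg (by simp),
    List.dropWhile_cons_of_neg (by simp)]
  simp

theorem ss_append_cons_of_forall_lt {L R : List ℕ} {m : ℕ} (h : ∀ y ∈ L ++ R, y < m) :
    ss (L ++ m :: R) = ss L ++ ss R ++ [m] := by
  refine ss_append_cons (fun hm => (h m (by simp [hm])).false) fun y hy => ?_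
  simp only [List.mem_append, List.mem_cons] at hy h
  rcases hy with hy | rfl | hy
  exacts [(h y (.inl hy)).le, le_rfl, (h y (.inr hy)).le]

theorem ss_perm (l : List ℕ) : (ss l).Perm l := by
  induction h : l.length using Nat.strong_induction_on generalizing l with
  | _ k ih =>
    cases l with
    | nil => simp [ss]
    | cons x xs =>
      obtain ⟨L, R, hLR, hmL⟩ := List.eq_append_cons_of_mem (foldrMaxMem x xs)
      rw [hLR] at h ⊢
      rw [ss_append_cons hmL fun y hy => List.le_max_of_le (hLR ▸ hy) le_rfl]
      have hL := ih L.length (by rw [← h, List.length_append, List.length_cons]; omega) L rfl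
      have hR := ih R.length (by rw [← h, List.length_append, List.length_cons]; omega) R rfl
      exact ((hL.append hR).append_right _).trans
        (List.perm_append_singleton _ _ |>.trans List.perm_middle.symm)

theorem perm_iterate_ss (l : List ℕ) (k : ℕ) : (ss^[k] l).Perm l := by
  induction k with
  | zero => rfl
  | succ k ih => rw [Function.iterate_succ_apply']; exact (ss_perm _).trans ih

theorem rtlMax_subset (l : List ℕ) : rtlMax l ⊆ l := by
  induction l with
  | nil => simp [rtlMax]
  | cons x xs ih =>
    rw [rtlMax]
    split_ifs
    · exact List.cons_subset_cons x ih
    · exact fun y hy => List.mem_cons_of_mem x (ih hy)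

theorem rtlMax_ne_nil {l : List ℕ} (hl : l ≠ []) : rtlMax l ≠ [] := by
  induction l with
  | nil => exact absurd rfl hl
  | cons x xs ih =>
    rw [rtlMax]
    split_ifs with hx
    · exact List.cons_ne_nil _ _
    · push Not at hx
      obtain ⟨y, hy, -⟩ := hx
      exact ih (List.ne_nil_of_mem hy)

theorem rtlMax_append_cons_of_forall_lt {L A : List ℕ} {m : ℕ} (h : ∀ y ∈ L ++ A, y < m) :
    rtlMax (L ++ m :: A) = m :: rtlMax A := by
  induction L with
  | nil => exact if_pos fun y hy => h y (by simpa using hy)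
  | cons x L ih =>
    have hx : ¬ ∀ y ∈ L ++ m :: A, y < x := fun hx =>
      lt_asymm (h x (by simp)) (hx m (by simp))
    rw [List.cons_append, rtlMax, if_neg hx]
    exact ih fun y hy => h y (List.mem_cons_of_mem x hy)

theorem pairwise_lt_append_singleton {l : List ℕ} {m : ℕ} (hl : l.Pairwise (· < ·))
    (h : ∀ y ∈ l, y < m) : (l ++ [m]).Pairwise (· < ·) :=
  List.pairwise_append.2 ⟨hl, List.pairwise_singleton _ _, fun y hy _ hz => by
    rw [List.mem_singleton.1 hz]; exact h y hy⟩

theorem forall_lt_of_nodup_append_cons {L R : List ℕ} {m : ℕ} (hnd : (L ++ m :: R).Nodup)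
    (hmax : ∀ y ∈ L ++ m :: R, y ≤ m) : ∀ y ∈ L ++ R, y < m := fun y hy =>
  (hmax y (List.perm_middle.symm.subset (List.mem_cons_of_mem m hy))).lt_of_ne
    (ne_of_mem_of_not_mem hy (List.nodup_cons.1 (List.nodup_middle.1 hnd)).1)

theorem takeWhile_append_zero_cons {A B : List ℕ} (hA : 0 ∉ A) :
    (A ++ 0 :: B).takeWhile (· ≠ 0) = A := by
  rw [List.takeWhile_append_of_pos fun y hy => by simpa using ne_of_mem_of_not_mem hy hA,
    List.takeWhile_cons_of_neg (by simp), List.append_nil]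

theorem takeWhile_ne_zero_eq_nil_of_pairwise {l : List ℕ} (hl : l.Pairwise (· < ·))
    (h0 : 0 ∈ l) : l.takeWhile (· ≠ 0) = [] := by
  cases l with
  | nil => rfl
  | cons x xs =>
    obtain rfl | h0 := List.mem_cons.1 h0
    · simp
    · exact absurd ((List.pairwise_cons.1 hl).1 0 h0) (Nat.not_lt_zero x)

def PassShape (A σ : List ℕ) : Prop :=
  ∃ A' B', σ = A' ++ 0 :: B' ∧ B'.Pairwise (· < ·) ∧ ∀ v, v ∈ A' ↔ v ∈ A ∧ v ∉ rtlMax A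

theorem passShape_ss_of_max_mem_prefix {L A B : List ℕ} {m : ℕ} (hLA : L.Disjoint A)
    (hlt : ∀ y ∈ L ++ A ++ 0 :: B, y < m) (h : PassShape A (ss (A ++ 0 :: B))) :
    PassShape (L ++ m :: A) (ss (L ++ m :: A ++ 0 :: B)) := by
  obtain ⟨A', B', hss, hB', hA'⟩ := h
  have hmL : m ∉ L := fun hm => (hlt m (by simp [hm])).false
  rw [List.append_assoc, List.cons_append,
    ss_append_cons_of_forall_lt fun y hy => hlt y (by simpa using hy), hss]
  refine ⟨ss L ++ A', B' ++ [m], by simp, ?_, fun v => ?_⟩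
  · refine pairwise_lt_append_singleton hB' fun y hy => hlt y ?_
    have : y ∈ ss (A ++ 0 :: B) := by rw [hss]; simp [hy]
    have := (ss_perm _).subset this
    simp only [List.mem_append, List.mem_cons] at this ⊢
    tauto
  · rw [rtlMax_append_cons_of_forall_lt fun y hy => hlt y (by
      simp only [List.mem_append, List.mem_cons] at hy ⊢; tauto), List.mem_append,
      (ss_perm L).mem_iff, hA']
    have hL : v ∈ L → v ≠ m ∧ v ∉ rtlMax A := fun hv =>
      ⟨ne_of_mem_of_not_mem hv hmL, fun hr => hLA hv (rtlMax_subset A hr)⟩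
    have hA : v ∈ A → v ≠ m := fun hv => (hlt v (by simp [hv])).ne
    simp only [List.mem_append, List.mem_cons]
    tauto

theorem passShape_ss_of_max_mem_suffix {A B : List ℕ} {m : ℕ}
    (hlt : ∀ y ∈ A ++ 0 :: B, y < m) (h : PassShape A (ss (A ++ 0 :: B))) :
    PassShape A (ss (A ++ 0 :: (B ++ [m]))) := by
  obtain ⟨A', B', hss, hB', hA'⟩ := h
  rw [show A ++ 0 :: (B ++ [m]) = A ++ 0 :: B ++ m :: [] by simp,
    ss_append_cons_of_forall_lt (by simpa using hlt), hss]
  refine ⟨A', B' ++ [m], by simp [ss], pairwise_lt_append_singleton hB' fun y hy => hlt y ?_, hA'⟩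
  have : y ∈ ss (A ++ 0 :: B) := by rw [hss]; simp [hy]
  exact (ss_perm _).subset this

theorem passShape_ss {A B : List ℕ} (hnd : (A ++ 0 :: B).Nodup) (hB : B.Pairwise (· < ·)) :
    PassShape A (ss (A ++ 0 :: B)) := by
  induction h : A.length + B.length using Nat.strong_induction_on generalizing A B with
  | _ k ih =>
    have hne : A ++ 0 :: B ≠ [] := by simp
    obtain ⟨m, hm, hmax⟩ : ∃ m ∈ A ++ 0 :: B, ∀ y ∈ A ++ 0 :: B, y ≤ m :=
      ⟨_, List.max_mem hne, fun y hy => List.le_max_of_mem hy⟩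
    rcases List.mem_append.1 hm with hmA | hmB
    · obtain ⟨L, A, rfl, -⟩ := List.eq_append_cons_of_mem hmA
      rw [List.append_assoc, List.cons_append] at hnd hmax
      have hlt := forall_lt_of_nodup_append_cons hnd hmax
      have hnd' := (List.nodup_cons.1 (List.nodup_middle.1 hnd)).2
      refine passShape_ss_of_max_mem_prefix
        (List.disjoint_append_right.1 (List.disjoint_of_nodup_append hnd')).1
        (by simpa using hlt) (ih _ ?_ hnd'.of_append_right hB rfl)
      simp only [← h, List.length_append, List.length_cons]
      omega
    rcases List.mem_cons.1 hmB with rfl | hmB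
    · have hlt := forall_lt_of_nodup_append_cons hnd hmax
      obtain ⟨rfl, rfl⟩ : A = [] ∧ B = [] := List.append_eq_nil_iff.1
        (List.eq_nil_iff_forall_not_mem.2 fun y hy => Nat.not_lt_zero y (hlt y hy))
      exact ⟨[], [], by simp [ss], List.Pairwise.nil, by simp [rtlMax]⟩
    · obtain ⟨B, B₂, rfl, -⟩ := List.eq_append_cons_of_mem hmB
      obtain rfl : B₂ = [] := List.eq_nil_iff_forall_not_mem.2 fun b hb =>
        (hmax b (by simp [hb])).not_gt
          ((List.pairwise_cons.1 (List.pairwise_append.1 hB).2.1).1 b hb)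
      rw [show A ++ 0 :: (B ++ [m]) = A ++ 0 :: B ++ m :: [] by simp] at hnd hmax
      have hlt := forall_lt_of_nodup_append_cons hnd hmax
      refine passShape_ss_of_max_mem_suffix (by simpa using hlt)
        (ih _ ?_ hnd.of_append_left (List.pairwise_append.1 hB).1 rfl)
      simp only [← h, List.length_append, List.length_cons]
      omega

def IncreasingAfterZero (σ : List ℕ) : Prop :=
  ∃ B, σ = σ.takeWhile (· ≠ 0) ++ 0 :: B ∧ B.Pairwise (· < ·)

theorem IncreasingAfterZero.pass {σ : List ℕ} (hnd : σ.Nodup) (h : IncreasingAfterZero σ) :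
    IncreasingAfterZero (ss σ) ∧ ∀ v, v ∈ (ss σ).takeWhile (· ≠ 0) ↔
      v ∈ σ.takeWhile (· ≠ 0) ∧ v ∉ rtlMax (σ.takeWhile (· ≠ 0)) := by
  obtain ⟨B, hσ, hB⟩ := h
  obtain ⟨A', B', hss, hB', hA'⟩ := passShape_ss (hσ ▸ hnd) hB
  have hA'0 : 0 ∉ A' := fun h => by simpa using List.mem_takeWhile_imp ((hA' 0).1 h).1
  rw [(congrArg ss hσ).trans hss, takeWhile_append_zero_cons hA'0]
  exact ⟨⟨B', by rw [takeWhile_append_zero_cons hA'0], hB'⟩, hA'⟩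

theorem IncreasingAfterZero.pairwise_of_takeWhile_eq_nil {σ : List ℕ} (hnd : σ.Nodup)
    (h : IncreasingAfterZero σ) (hnil : σ.takeWhile (· ≠ 0) = []) : σ.Pairwise (· < ·) := by
  obtain ⟨B, hσ, hB⟩ := h
  rw [hnil, List.nil_append] at hσ
  rw [hσ] at hnd ⊢
  exact List.pairwise_cons.2 ⟨fun b hb => Nat.pos_of_ne_zero
    (ne_of_mem_of_not_mem hb (List.nodup_cons.1 hnd).1), hB⟩

end StackSort

open StackSort

section Columns

variable {n : ℕ} {π : List ℕ}

theorem nodup_iterate_ss (hπ : π.Perm (List.range (n + 1))) (k : ℕ) : (ss^[k] π).Nodup :=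
  ((perm_iterate_ss π k).trans hπ).nodup_iff.2 List.nodup_range

theorem eq_prefixAt_one_append_zero (hπ : π.Perm (List.range (n + 1)))
    (h0 : π.getLast? = some 0) : π = prefixAt π 1 ++ [0] := by
  obtain ⟨A, rfl⟩ := List.getLast?_eq_some_iff.1 h0
  have hA : 0 ∉ A := fun h =>
    (List.nodup_append.1 (hπ.nodup_iff.2 List.nodup_range)).2.2 0 h 0 (by simp) rfl
  exact congrArg (· ++ [0]) (takeWhile_append_zero_cons hA).symm

theorem increasingAfterZero_iterate (hπ : π.Perm (List.range (n + 1)))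
    (h0 : π.getLast? = some 0) (k : ℕ) : IncreasingAfterZero (ss^[k] π) := by
  induction k with
  | zero => exact ⟨[], eq_prefixAt_one_append_zero hπ h0, .nil⟩
  | succ k ih =>
    rw [Function.iterate_succ_apply']
    exact (ih.pass (nodup_iterate_ss hπ k)).1

theorem mem_prefixAt_succ (hπ : π.Perm (List.range (n + 1))) (h0 : π.getLast? = some 0)
    {i : ℕ} (hi : 1 ≤ i) (v : ℕ) :
    v ∈ prefixAt π (i + 1) ↔ v ∈ prefixAt π i ∧ v ∉ colSeqAt π i := by
  obtain ⟨k, rfl⟩ := Nat.exists_eq_add_of_le' hi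
  have := ((increasingAfterZero_iterate hπ h0 k).pass (nodup_iterate_ss hπ k)).2 v
  rwa [← Function.iterate_succ_apply' ss] at this

theorem prefixAt_subset_of_le (hπ : π.Perm (List.range (n + 1))) (h0 : π.getLast? = some 0)
    {i j : ℕ} (hij : i ≤ j) : prefixAt π j ⊆ prefixAt π i := by
  induction j, hij using Nat.le_induction with
  | base => exact List.Subset.refl _
  | succ j _ ih =>
    rcases Nat.eq_zero_or_pos j with rfl | hj
    · exact ih
    · exact fun v hv => ih ((mem_prefixAt_succ hπ h0 hj v).1 hv).1

theorem not_mem_colSeqAt_of_lt (hπ : π.Perm (List.range (n + 1))) (h0 : π.getLast? = some 0)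
    {i j v : ℕ} (hi : 1 ≤ i) (hij : i < j) (hv : v ∈ colSeqAt π i) : v ∉ colSeqAt π j :=
  fun hv' => ((mem_prefixAt_succ hπ h0 hi v).1
    (prefixAt_subset_of_le hπ h0 hij (rtlMax_subset _ hv'))).2 hv

theorem mem_prefixAt_one (hπ : π.Perm (List.range (n + 1))) (h0 : π.getLast? = some 0)
    (v : ℕ) : v ∈ prefixAt π 1 ↔ 1 ≤ v ∧ v ≤ n := by
  have hπ1 := eq_prefixAt_one_append_zero hπ h0
  have h0P : 0 ∉ prefixAt π 1 := fun h => by simpa using List.mem_takeWhile_imp h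
  have hvπ : v ∈ π ↔ v ≤ n := by simpa [Nat.lt_succ_iff] using hπ.mem_iff (a := v)
  rw [hπ1, List.mem_append, List.mem_singleton] at hvπ
  constructor
  · intro hv
    exact ⟨Nat.pos_of_ne_zero (ne_of_mem_of_not_mem hv h0P), hvπ.1 (.inl hv)⟩
  · rintro ⟨hv1, hvn⟩
    exact (hvπ.2 hvn).resolve_right (by omega)

theorem exists_mem_colSeqAt (hπ : π.Perm (List.range (n + 1))) (h0 : π.getLast? = some 0)
    {v : ℕ} (hv : v ∈ prefixAt π 1) (N : ℕ) (hN : v ∉ prefixAt π (N + 1)) :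
    ∃ i, 1 ≤ i ∧ i ≤ N ∧ v ∈ colSeqAt π i := by
  induction N with
  | zero => exact absurd hv hN
  | succ N ih =>
    by_cases hvN : v ∈ prefixAt π (N + 1)
    · refine ⟨N + 1, by omega, le_rfl, ?_⟩
      by_contra hc
      exact hN ((mem_prefixAt_succ hπ h0 (by omega) v).2 ⟨hvN, hc⟩)
    · obtain ⟨i, hi1, hiN, hvi⟩ := ih hvN
      exact ⟨i, hi1, by omega, hvi⟩

theorem prefixAt_succ_ssubset (hπ : π.Perm (List.range (n + 1))) (h0 : π.getLast? = some 0)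
    {i : ℕ} (hi : 1 ≤ i) (hne : prefixAt π i ≠ []) :
    (prefixAt π (i + 1)).toFinset ⊂ (prefixAt π i).toFinset := by
  obtain ⟨x, hx⟩ := List.exists_mem_of_ne_nil _ (rtlMax_ne_nil hne)
  refine (Finset.ssubset_iff_of_subset fun y hy => ?_).2 ⟨x, ?_, ?_⟩
  · simp only [List.mem_toFinset] at hy ⊢
    exact ((mem_prefixAt_succ hπ h0 hi y).1 hy).1
  · simpa using rtlMax_subset _ hx
  · exact fun h => ((mem_prefixAt_succ hπ h0 hi x).1 (List.mem_toFinset.1 h)).2 hx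

theorem exists_prefixAt_eq_nil (hπ : π.Perm (List.range (n + 1))) (h0 : π.getLast? = some 0) :
    ∃ k, prefixAt π (k + 1) = [] := by
  by_contra! h
  have hcard : ∀ k, (prefixAt π (k + 1)).toFinset.card + k ≤ (prefixAt π 1).toFinset.card := by
    intro k
    induction k with
    | zero => simp
    | succ k ih =>
      have := Finset.card_lt_card (prefixAt_succ_ssubset hπ h0 (by omega) (h k))
      omega
  have := hcard ((prefixAt π 1).toFinset.card + 1)
  omega

theorem prefixAt_met_succ (hπ : π.Perm (List.range (n + 1))) (h0 : π.getLast? = some 0) :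
    prefixAt π (met π + 1) = [] := by
  obtain ⟨k, hk⟩ := exists_prefixAt_eq_nil hπ h0
  have hs : (ss^[met π] π).Pairwise (· < ·) :=
    Nat.sInf_mem (s := {k | (ss^[k] π).Pairwise (· < ·)}) ⟨k,
      (increasingAfterZero_iterate hπ h0 k).pairwise_of_takeWhile_eq_nil (nodup_iterate_ss hπ k) hk⟩
  exact takeWhile_ne_zero_eq_nil_of_pairwise hs
    (((perm_iterate_ss π _).trans hπ).mem_iff.2 (by simp))

end Columns

/-- Corollary 3.4: the sets `{c_{π,i,j} : 1 ≤ j ≤ |C_{π,i}|}`, `1 ≤ i ≤ met(π)`, are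
pairwise disjoint with union `{1, …, n}`. -/
theorem stmt_8 (n : ℕ) (π : List ℕ) (hπ : π.Perm (List.range (n + 1)))
    (h0 : π.getLast? = some 0) :
    (∀ i₁ i₂, 1 ≤ i₁ → i₁ ≤ met π → 1 ≤ i₂ → i₂ ≤ met π → i₁ ≠ i₂ →
      ∀ v ∈ colSeqAt π i₁, v ∉ colSeqAt π i₂) ∧
    (∀ v, (∃ i, 1 ≤ i ∧ i ≤ met π ∧ v ∈ colSeqAt π i) ↔ (1 ≤ v ∧ v ≤ n)) := by
  refine ⟨fun i₁ i₂ hi₁ _ hi₂ _ hne v hv₁ hv₂ => ?_, fun v => ⟨?_, fun hv => ?_⟩⟩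
  · rcases Nat.lt_or_gt_of_ne hne with h | h
    · exact not_mem_colSeqAt_of_lt hπ h0 hi₁ h hv₁ hv₂
    · exact not_mem_colSeqAt_of_lt hπ h0 hi₂ h hv₂ hv₁
  · rintro ⟨i, -, -, hv⟩
    exact (mem_prefixAt_one hπ h0 v).1 (prefixAt_subset_of_le hπ h0 (Nat.zero_le i)
      (rtlMax_subset _ hv))
  · exact exists_mem_colSeqAt hπ h0 ((mem_prefixAt_one hπ h0 v).2 hv) (met π)
      (by simp [prefixAt_met_succ hπ h0])
end
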